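/- Let J = [a,b] with a < b and f ∈ L²(J) with f ≥ 0 and ∫_J f^{2/3} dL¹ > 0. Then the unique minimizer of F(ρ) = (1/12) ∫_J f²/ρ² dL¹ over measurable ρ : J → (0,∞] with ∫_J ρ dL¹ = 1 is ρ = c f^{2/3} where c = (∫_J f^{2/3} dL¹)^{-1}, and the minimum value is (1/12)(∫_J f^{2/3} dL¹)³. -/

import Mathlib

/-!
With `g = f^{2/3}` (so `f² = g³`) and `I = ∫ g`, the three-term AM-GM inequality
`3 I² g ≤ g³ / ρ² + I³ ρ + I³ ρ` holds pointwise, with equality exactly when `g = I ρ`.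
Integrating it against an admissible density `ρ` (of total mass one) gives
`∫ f² / ρ² = I³ + ∫ (nonnegative defect)`, so `I³` is the minimum of `12 F`, and it is
attained exactly when the defect vanishes a.e., i.e. when `ρ = g / I` a.e.
-/

open MeasureTheory

theorem MeasureTheory.MemLp.integrable_rpow_of_nonneg {α : Type*} [MeasurableSpace α]
    {μ : Measure α} [IsFiniteMeasure μ] {f : α → ℝ} {p : ENNReal} {q : ℝ}
    (hf : MemLp f p μ) (hf0 : 0 ≤ᵐ[μ] f) (hq : 0 < q) (hqp : ENNReal.ofReal q ≤ p) :
    Integrable (fun x => f x ^ q) μ := by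
  have h := (hf.mono_exponent hqp).integrable_norm_rpow (by simpa using hq) ENNReal.ofReal_ne_top
  rw [ENNReal.toReal_ofReal hq.le] at h
  refine h.congr (hf0.mono fun x hx => ?_)
  simp only [Real.norm_eq_abs, abs_of_nonneg hx]

theorem Real.rpow_two_div_three_pow_three {s : ℝ} (hs : 0 ≤ s) :
    (s ^ ((2 : ℝ) / 3)) ^ 3 = s ^ 2 := by
  rw [← Real.rpow_natCast, ← Real.rpow_mul hs]
  norm_num

-- The defect in the AM-GM inequality `3 k² u ≤ u³ / t² + k³ t + k³ t`.
noncomputable def amgmDefect (k u t : ℝ) : ℝ := u ^ 3 / t ^ 2 + 2 * k ^ 3 * t - 3 * k ^ 2 * u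

theorem amgmDefect_eq {t : ℝ} (k u : ℝ) (ht : t ≠ 0) :
    amgmDefect k u t = (u - k * t) ^ 2 * (u + 2 * k * t) / t ^ 2 := by
  unfold amgmDefect
  field_simp
  ring

theorem amgmDefect_nonneg {k u t : ℝ} (hk : 0 ≤ k) (hu : 0 ≤ u) (ht : 0 < t) :
    0 ≤ amgmDefect k u t := by
  rw [amgmDefect_eq k u ht.ne']
  positivity

theorem eq_mul_of_amgmDefect_eq_zero {k u t : ℝ} (hk : 0 < k) (hu : 0 ≤ u) (ht : 0 < t)
    (h : amgmDefect k u t = 0) : u = k * t := by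
  have hpos : 0 < u + 2 * k * t := by positivity
  rw [amgmDefect_eq k u ht.ne', div_eq_zero_iff, mul_eq_zero] at h
  rcases h with (h | h) | h
  · exact sub_eq_zero.1 (pow_eq_zero_iff two_ne_zero |>.1 h)
  · exact absurd h hpos.ne'
  · exact absurd h (by positivity)

section

variable {α : Type*} [MeasurableSpace α] {μ : Measure α} {f ρ : α → ℝ} {I : ℝ}

theorem lintegral_sq_div_sq_eq_add_lintegral_amgmDefect (hf0 : 0 ≤ᵐ[μ] f)
    (hg : Integrable (fun x => f x ^ ((2 : ℝ) / 3)) μ)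
    (hI : ∫ x, f x ^ ((2 : ℝ) / 3) ∂μ = I) (hI0 : 0 < I)
    (hρ : Measurable ρ) (hρ0 : ∀ᵐ x ∂μ, 0 < ρ x) (hρ1 : ∫⁻ x, ENNReal.ofReal (ρ x) ∂μ = 1) :
    ∫⁻ x, ENNReal.ofReal (f x ^ 2 / ρ x ^ 2) ∂μ =
      ENNReal.ofReal (I ^ 3) +
        ∫⁻ x, ENNReal.ofReal (amgmDefect I (f x ^ ((2 : ℝ) / 3)) (ρ x)) ∂μ := by
  have hpoint : ∀ᵐ x ∂μ, ENNReal.ofReal (f x ^ 2 / ρ x ^ 2) + ENNReal.ofReal (2 * I ^ 3 * ρ x) =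
      ENNReal.ofReal (amgmDefect I (f x ^ ((2 : ℝ) / 3)) (ρ x)) +
        ENNReal.ofReal (3 * I ^ 2 * f x ^ ((2 : ℝ) / 3)) := by
    filter_upwards [hf0, hρ0] with x hx hρx
    have hgx : 0 ≤ f x ^ ((2 : ℝ) / 3) := Real.rpow_nonneg hx _
    rw [← ENNReal.ofReal_add (by positivity) (by positivity),
      ← ENNReal.ofReal_add (amgmDefect_nonneg hI0.le hgx hρx) (by positivity), amgmDefect,
      Real.rpow_two_div_three_pow_three hx]
    ring_nf
  have hmass : ∫⁻ x, ENNReal.ofReal (2 * I ^ 3 * ρ x) ∂μ = ENNReal.ofReal (2 * I ^ 3) := by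
    simp_rw [ENNReal.ofReal_mul (by positivity : (0 : ℝ) ≤ 2 * I ^ 3)]
    rw [lintegral_const_mul _ hρ.ennreal_ofReal, hρ1, mul_one]
  have hcomp : ∫⁻ x, ENNReal.ofReal (3 * I ^ 2 * f x ^ ((2 : ℝ) / 3)) ∂μ =
      ENNReal.ofReal (3 * I ^ 3) := by
    rw [← ofReal_integral_eq_lintegral_ofReal (hg.const_mul _)
      (hf0.mono fun x hx => mul_nonneg (by positivity) (Real.rpow_nonneg hx _)),
      integral_const_mul, hI]
    ring_nf
  have hsum := lintegral_congr_ae hpoint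
  rw [lintegral_add_right' _ (hρ.const_mul _).ennreal_ofReal.aemeasurable, hmass,
    lintegral_add_right' _ (hg.const_mul _).aemeasurable.ennreal_ofReal, hcomp,
    show 3 * I ^ 3 = I ^ 3 + 2 * I ^ 3 by ring, ENNReal.ofReal_add (by positivity) (by positivity),
    ← add_assoc] at hsum
  rw [add_comm]
  exact (ENNReal.add_left_inj ENNReal.ofReal_ne_top).1 hsum

theorem ofReal_pow_three_le_lintegral_sq_div_sq (hf0 : 0 ≤ᵐ[μ] f)
    (hg : Integrable (fun x => f x ^ ((2 : ℝ) / 3)) μ)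
    (hI : ∫ x, f x ^ ((2 : ℝ) / 3) ∂μ = I) (hI0 : 0 < I)
    (hρ : Measurable ρ) (hρ0 : ∀ᵐ x ∂μ, 0 < ρ x) (hρ1 : ∫⁻ x, ENNReal.ofReal (ρ x) ∂μ = 1) :
    ENNReal.ofReal (I ^ 3) ≤ ∫⁻ x, ENNReal.ofReal (f x ^ 2 / ρ x ^ 2) ∂μ := by
  rw [lintegral_sq_div_sq_eq_add_lintegral_amgmDefect hf0 hg hI hI0 hρ hρ0 hρ1]
  exact le_self_add

theorem ae_eq_inv_mul_rpow_of_lintegral_sq_div_sq_eq (hf0 : 0 ≤ᵐ[μ] f)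
    (hg : Integrable (fun x => f x ^ ((2 : ℝ) / 3)) μ)
    (hI : ∫ x, f x ^ ((2 : ℝ) / 3) ∂μ = I) (hI0 : 0 < I)
    (hρ : Measurable ρ) (hρ0 : ∀ᵐ x ∂μ, 0 < ρ x) (hρ1 : ∫⁻ x, ENNReal.ofReal (ρ x) ∂μ = 1)
    (heq : ∫⁻ x, ENNReal.ofReal (f x ^ 2 / ρ x ^ 2) ∂μ = ENNReal.ofReal (I ^ 3)) :
    ∀ᵐ x ∂μ, ρ x = I⁻¹ * f x ^ ((2 : ℝ) / 3) := by
  rw [lintegral_sq_div_sq_eq_add_lintegral_amgmDefect hf0 hg hI hI0 hρ hρ0 hρ1] at heq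
  have hzero := (ENNReal.add_right_inj ENNReal.ofReal_ne_top).1 (heq.trans (add_zero _).symm)
  have hmeas : AEMeasurable
      (fun x => ENNReal.ofReal (amgmDefect I (f x ^ ((2 : ℝ) / 3)) (ρ x))) μ := by
    unfold amgmDefect
    have hgm := hg.aemeasurable
    fun_prop
  filter_upwards [(lintegral_eq_zero_iff' hmeas).1 hzero, hf0, hρ0] with x hx hfx hρx
  have hgx : 0 ≤ f x ^ ((2 : ℝ) / 3) := Real.rpow_nonneg hfx _
  have hdefect := le_antisymm (ENNReal.ofReal_eq_zero.1 hx) (amgmDefect_nonneg hI0.le hgx hρx)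
  rw [eq_mul_of_amgmDefect_eq_zero hI0 hgx hρx hdefect, inv_mul_cancel_left₀ hI0.ne']

theorem lintegral_ofReal_inv_mul_rpow_two_div_three (hf0 : 0 ≤ᵐ[μ] f)
    (hg : Integrable (fun x => f x ^ ((2 : ℝ) / 3)) μ)
    (hI : ∫ x, f x ^ ((2 : ℝ) / 3) ∂μ = I) (hI0 : 0 < I) :
    ∫⁻ x, ENNReal.ofReal (I⁻¹ * f x ^ ((2 : ℝ) / 3)) ∂μ = 1 := by
  rw [← ofReal_integral_eq_lintegral_ofReal (hg.const_mul _)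
      (hf0.mono fun x hx => mul_nonneg (inv_nonneg.2 hI0.le) (Real.rpow_nonneg hx _)),
    integral_const_mul, hI, inv_mul_cancel₀ hI0.ne', ENNReal.ofReal_one]

theorem lintegral_sq_div_sq_inv_mul_rpow_two_div_three (hf0 : 0 ≤ᵐ[μ] f)
    (hg : Integrable (fun x => f x ^ ((2 : ℝ) / 3)) μ)
    (hI : ∫ x, f x ^ ((2 : ℝ) / 3) ∂μ = I) :
    ∫⁻ x, ENNReal.ofReal (f x ^ 2 / (I⁻¹ * f x ^ ((2 : ℝ) / 3)) ^ 2) ∂μ =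
      ENNReal.ofReal (I ^ 3) := by
  have hpoint : ∀ᵐ x ∂μ, f x ^ 2 / (I⁻¹ * f x ^ ((2 : ℝ) / 3)) ^ 2 =
      I ^ 2 * f x ^ ((2 : ℝ) / 3) := by
    filter_upwards [hf0] with x hx
    rw [← Real.rpow_two_div_three_pow_three hx]
    generalize f x ^ ((2 : ℝ) / 3) = u
    rcases eq_or_ne u 0 with rfl | hu
    · simp
    rcases eq_or_ne I 0 with rfl | hI0
    · simp
    field_simp
  rw [lintegral_congr_ae (hpoint.mono fun x hx => congrArg ENNReal.ofReal hx),
    ← ofReal_integral_eq_lintegral_ofReal (hg.const_mul _)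
      (hf0.mono fun x hx => mul_nonneg (sq_nonneg _) (Real.rpow_nonneg hx _)),
    integral_const_mul, hI]
  ring_nf
end

theorem stmt15_general (a b : ℝ) (f : ℝ → ℝ)
    (hf : MemLp f 2 (volume.restrict (Set.Icc a b)))
    (hf0 : ∀ᵐ x ∂(volume.restrict (Set.Icc a b)), 0 ≤ f x)
    (hpos : 0 < ∫ x in Set.Icc a b, f x ^ ((2 : ℝ) / 3))
    (c : ℝ) (hc : c = (∫ x in Set.Icc a b, f x ^ ((2 : ℝ) / 3))⁻¹)
    -- F is the limit compliance functional (with values in [0,∞])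
    (F : (ℝ → ℝ) → ENNReal)
    (hF : ∀ ρ : ℝ → ℝ, F ρ =
      (1 / 12 : ENNReal) * ∫⁻ x in Set.Icc a b, ENNReal.ofReal ((f x) ^ 2 / (ρ x) ^ 2)) :
    -- ρ* = c f^{2/3} is admissible, is a minimizer, attains the claimed value,
    -- and is the unique minimizer (up to a.e. equality)
    (∫⁻ x in Set.Icc a b, ENNReal.ofReal (c * f x ^ ((2 : ℝ) / 3)) = 1) ∧
      F (fun x => c * f x ^ ((2 : ℝ) / 3)) =
        ENNReal.ofReal ((1 / 12) * (∫ x in Set.Icc a b, f x ^ ((2 : ℝ) / 3)) ^ 3) ∧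
      (∀ ρ : ℝ → ℝ, Measurable ρ → (∀ᵐ x ∂(volume.restrict (Set.Icc a b)), 0 < ρ x) →
        (∫⁻ x in Set.Icc a b, ENNReal.ofReal (ρ x)) = 1 →
        F (fun x => c * f x ^ ((2 : ℝ) / 3)) ≤ F ρ) ∧
      (∀ ρ : ℝ → ℝ, Measurable ρ → (∀ᵐ x ∂(volume.restrict (Set.Icc a b)), 0 < ρ x) →
        (∫⁻ x in Set.Icc a b, ENNReal.ofReal (ρ x)) = 1 →
        F ρ = F (fun x => c * f x ^ ((2 : ℝ) / 3)) →
        ∀ᵐ x ∂(volume.restrict (Set.Icc a b)), ρ x = c * f x ^ ((2 : ℝ) / 3)) := by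
  set I := ∫ x in Set.Icc a b, f x ^ ((2 : ℝ) / 3)
  have hg : Integrable (fun x => f x ^ ((2 : ℝ) / 3)) (volume.restrict (Set.Icc a b)) :=
    hf.integrable_rpow_of_nonneg hf0 (by norm_num) (by norm_num)
  have hvalue : F (fun x => c * f x ^ ((2 : ℝ) / 3)) = 1 / 12 * ENNReal.ofReal (I ^ 3) := by
    rw [hF, hc, lintegral_sq_div_sq_inv_mul_rpow_two_div_three hf0 hg rfl]
  subst hc
  refine ⟨lintegral_ofReal_inv_mul_rpow_two_div_three hf0 hg rfl hpos, ?_,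
    fun ρ hρ hρ0 hρ1 => ?_, fun ρ hρ hρ0 hρ1 hFρ => ?_⟩
  · rw [hvalue, ENNReal.ofReal_mul (by norm_num), ENNReal.ofReal_div_of_pos (by norm_num),
      ENNReal.ofReal_one, ENNReal.ofReal_ofNat]
  · rw [hvalue, hF]
    gcongr
    exact ofReal_pow_three_le_lintegral_sq_div_sq hf0 hg rfl hpos hρ hρ0 hρ1
  · rw [hvalue, hF] at hFρ
    exact ae_eq_inv_mul_rpow_of_lintegral_sq_div_sq_eq hf0 hg rfl hpos hρ hρ0 hρ1
      ((ENNReal.mul_right_inj (by norm_num) (by norm_num)).1 hFρ)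

theorem stmt15 (a b : ℝ) (hab : a < b) (f : ℝ → ℝ)
    (hf : MemLp f 2 (volume.restrict (Set.Icc a b)))
    (hf0 : ∀ᵐ x ∂(volume.restrict (Set.Icc a b)), 0 ≤ f x)
    (hpos : 0 < ∫ x in Set.Icc a b, f x ^ ((2 : ℝ) / 3))
    (c : ℝ) (hc : c = (∫ x in Set.Icc a b, f x ^ ((2 : ℝ) / 3))⁻¹)
    -- F is the limit compliance functional (with values in [0,∞])
    (F : (ℝ → ℝ) → ENNReal)
    (hF : ∀ ρ : ℝ → ℝ, F ρ =
      (1 / 12 : ENNReal) * ∫⁻ x in Set.Icc a b, ENNReal.ofReal ((f x) ^ 2 / (ρ x) ^ 2)) :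
    -- ρ* = c f^{2/3} is admissible, is a minimizer, attains the claimed value,
    -- and is the unique minimizer (up to a.e. equality)
    (∫⁻ x in Set.Icc a b, ENNReal.ofReal (c * f x ^ ((2 : ℝ) / 3)) = 1) ∧
      F (fun x => c * f x ^ ((2 : ℝ) / 3)) =
        ENNReal.ofReal ((1 / 12) * (∫ x in Set.Icc a b, f x ^ ((2 : ℝ) / 3)) ^ 3) ∧
      (∀ ρ : ℝ → ℝ, Measurable ρ → (∀ᵐ x ∂(volume.restrict (Set.Icc a b)), 0 < ρ x) →
        (∫⁻ x in Set.Icc a b, ENNReal.ofReal (ρ x)) = 1 →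
        F (fun x => c * f x ^ ((2 : ℝ) / 3)) ≤ F ρ) ∧
      (∀ ρ : ℝ → ℝ, Measurable ρ → (∀ᵐ x ∂(volume.restrict (Set.Icc a b)), 0 < ρ x) →
        (∫⁻ x in Set.Icc a b, ENNReal.ofReal (ρ x)) = 1 →
        F ρ = F (fun x => c * f x ^ ((2 : ℝ) / 3)) →
        ∀ᵐ x ∂(volume.restrict (Set.Icc a b)), ρ x = c * f x ^ ((2 : ℝ) / 3)) :=
  stmt15_general a b f hf hf0 hpos c hc F hF
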